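/- arXiv:2109.09634 — 7 statements merged into one kernel-verified Lean document; each statement's English description precedes it below -/
import Mathlib

section
/- Let C be a semi-cartesian monoidal category with uniform deletion ε and let Z be an object of C. The following are equivalent: (1) there exists a morphism δ : Z → Z ⊗ Z with (id_Z ⊗ ε_Z) ∘ δ = id_Z and (ε_Z ⊗ id_Z) ∘ δ = id_Z; (2) for all objects X, Y and all morphisms f : Z → X and g : Z → Y, there exists a morphism h : Z → X ⊗ Y with π¹_{XY} ∘ h = f and π²_{XY} ∘ h = g. -/
/-!
Since `𝟙_ C` is terminal, deleting one factor of `f ⊗ g` is the same as deleting it first and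
then applying the remaining map. Hence a counital `δ` yields the pairing `δ ≫ (f ⊗ g)`, and
conversely the pairing of `𝟙 Z` with itself is counital.
-/

open CategoryTheory CategoryTheory.Limits MonoidalCategory

namespace CategoryTheory.MonoidalCategory

variable {C : Type*} [Category C] [MonoidalCategory C] (hT : IsTerminal (𝟙_ C)) {Z W X Y : C}

lemma tensorHom_comp_fst_of_isTerminal (f : Z ⟶ X) (g : W ⟶ Y) :
    (f ⊗ₘ g) ≫ (𝟙 X ⊗ₘ hT.from Y) ≫ (ρ_ X).hom = (𝟙 Z ⊗ₘ hT.from W) ≫ (ρ_ Z).hom ≫ f := by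
  rw [tensorHom_comp_tensorHom_assoc, Category.comp_id, hT.comp_from,
    MonoidalCategory.tensorHom_def'_assoc, rightUnitor_naturality, id_tensorHom]

lemma tensorHom_comp_snd_of_isTerminal (f : Z ⟶ X) (g : W ⟶ Y) :
    (f ⊗ₘ g) ≫ (hT.from X ⊗ₘ 𝟙 Y) ≫ (λ_ Y).hom = (hT.from Z ⊗ₘ 𝟙 W) ≫ (λ_ W).hom ≫ g := by
  rw [tensorHom_comp_tensorHom_assoc, Category.comp_id, hT.comp_from,
    MonoidalCategory.tensorHom_def_assoc, leftUnitor_naturality, tensorHom_id]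

end CategoryTheory.MonoidalCategory

/-- In a semi-cartesian monoidal category (unit object terminal, with uniform deletion
`ε_X := hT.from X`), for an object `Z` the following are equivalent:
(1) there is a counital morphism `Z ⟶ Z ⊗ Z`;
(2) for all `f : Z ⟶ X`, `g : Z ⟶ Y` there is `h : Z ⟶ X ⊗ Y` with
`π¹ ∘ h = f` and `π² ∘ h = g`, where `π¹ = id_X ⊗ ε_Y` and `π² = ε_X ⊗ id_Y`
(composed with the unitors). -/
theorem stmt1 {C : Type*} [Category C] [MonoidalCategory C]
    (hT : IsTerminal (𝟙_ C)) (Z : C) :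
    (∃ δ : Z ⟶ Z ⊗ Z,
        δ ≫ (𝟙 Z ⊗ₘ hT.from Z) ≫ (ρ_ Z).hom = 𝟙 Z ∧
        δ ≫ (hT.from Z ⊗ₘ 𝟙 Z) ≫ (λ_ Z).hom = 𝟙 Z) ↔
    (∀ (X Y : C) (f : Z ⟶ X) (g : Z ⟶ Y), ∃ h : Z ⟶ X ⊗ Y,
        h ≫ (𝟙 X ⊗ₘ hT.from Y) ≫ (ρ_ X).hom = f ∧
        h ≫ (hT.from X ⊗ₘ 𝟙 Y) ≫ (λ_ Y).hom = g) := by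
  constructor
  · rintro ⟨δ, hfst, hsnd⟩ X Y f g
    refine ⟨δ ≫ (f ⊗ₘ g), ?_, ?_⟩
    · rw [Category.assoc, tensorHom_comp_fst_of_isTerminal, reassoc_of% hfst]
    · rw [Category.assoc, tensorHom_comp_snd_of_isTerminal, reassoc_of% hsnd]
  · intro pairing
    exact pairing Z Z (𝟙 Z) (𝟙 Z)
end

section
/- A semi-cartesian monoidal category C is cartesian if and only if there exists a family of morphisms Δ_X : X → X ⊗ X, natural in X, which is counital (i.e., (id_X ⊗ ε_X) ∘ Δ_X = id_X and (ε_X ⊗ id_X) ∘ Δ_X = id_X for all X) and which satisfies (π¹_{XY} ⊗ π²_{XY}) ∘ Δ_{X⊗Y} = id_{X⊗Y} for all objects X, Y. -/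
/-! The pairing of `f : Z ⟶ X` and `g : Z ⟶ Y` is `Δ_Z ≫ (f ⊗ g)`. It is unique because, by
naturality and the splitting, every `h : Z ⟶ X ⊗ Y` satisfies
`h = h ≫ Δ_{X⊗Y} ≫ (π¹ ⊗ π²) = Δ_Z ≫ ((h ≫ π¹) ⊗ (h ≫ π²))`.
Conversely, in a cartesian category `Δ_X := ⟨id, id⟩`, and naturality, counitality and the
splitting all follow from uniqueness of pairings, since both sides have the same projections. -/

open CategoryTheory CategoryTheory.Limits MonoidalCategory

variable {C : Type*} [Category C] [MonoidalCategory C]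

/-- The first canonical projection `π¹_{XY} = id_X ⊗ ε_Y : X ⊗ Y ⟶ X`
in a semi-cartesian monoidal category. -/
def pr1 (hT : IsTerminal (𝟙_ C)) (X Y : C) : X ⊗ Y ⟶ X :=
  (𝟙 X ⊗ₘ hT.from Y) ≫ (ρ_ X).hom

/-- The second canonical projection `π²_{XY} = ε_X ⊗ id_Y : X ⊗ Y ⟶ Y`. -/
def pr2 (hT : IsTerminal (𝟙_ C)) (X Y : C) : X ⊗ Y ⟶ Y :=
  (hT.from X ⊗ₘ 𝟙 Y) ≫ (λ_ Y).hom

section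

variable (hT : IsTerminal (𝟙_ C))

def TensorIsProduct : Prop :=
  ∀ (X Y Z : C) (f : Z ⟶ X) (g : Z ⟶ Y), ∃! h : Z ⟶ X ⊗ Y,
    h ≫ pr1 hT X Y = f ∧ h ≫ pr2 hT X Y = g

variable {hT}

lemma tensorHom_comp_pr1 {Z W X Y : C} (f : Z ⟶ X) (g : W ⟶ Y) :
    (f ⊗ₘ g) ≫ pr1 hT X Y = pr1 hT Z W ≫ f := by
  rw [pr1, pr1, tensorHom_comp_tensorHom_assoc, hT.hom_ext (g ≫ _) (hT.from W)]
  simp [MonoidalCategory.tensorHom_def']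

lemma tensorHom_comp_pr2 {Z W X Y : C} (f : Z ⟶ X) (g : W ⟶ Y) :
    (f ⊗ₘ g) ≫ pr2 hT X Y = pr2 hT Z W ≫ g := by
  rw [pr2, pr2, tensorHom_comp_tensorHom_assoc, hT.hom_ext (f ≫ _) (hT.from Z)]
  simp [MonoidalCategory.tensorHom_def]

lemma TensorIsProduct.hom_ext (H : TensorIsProduct hT) {X Y Z : C} {h h' : Z ⟶ X ⊗ Y}
    (h₁ : h ≫ pr1 hT X Y = h' ≫ pr1 hT X Y) (h₂ : h ≫ pr2 hT X Y = h' ≫ pr2 hT X Y) :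
    h = h' :=
  (H X Y Z _ _).unique ⟨h₁, h₂⟩ ⟨rfl, rfl⟩

lemma TensorIsProduct.exists_diag (H : TensorIsProduct hT) :
    ∃ Δ : ∀ X : C, X ⟶ X ⊗ X,
      (∀ {X Y : C} (f : X ⟶ Y), f ≫ Δ Y = Δ X ≫ (f ⊗ₘ f)) ∧
      (∀ X : C, Δ X ≫ pr1 hT X X = 𝟙 X) ∧
      (∀ X : C, Δ X ≫ pr2 hT X X = 𝟙 X) ∧
      (∀ X Y : C, Δ (X ⊗ Y) ≫ (pr1 hT X Y ⊗ₘ pr2 hT X Y) = 𝟙 (X ⊗ Y)) := by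
  choose Δ hΔ₁ hΔ₂ using fun X : C => (H X X X (𝟙 X) (𝟙 X)).exists
  refine ⟨Δ, fun f => H.hom_ext ?_ ?_, hΔ₁, hΔ₂, fun X Y => H.hom_ext ?_ ?_⟩ <;>
    simp [tensorHom_comp_pr1, tensorHom_comp_pr2, reassoc_of% hΔ₁, reassoc_of% hΔ₂, hΔ₁, hΔ₂]

lemma comp_tensorHom_comp_pr1 {X Y Z : C} {d : Z ⟶ Z ⊗ Z} (hd : d ≫ pr1 hT Z Z = 𝟙 Z)
    (f : Z ⟶ X) (g : Z ⟶ Y) : (d ≫ (f ⊗ₘ g)) ≫ pr1 hT X Y = f := by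
  rw [Category.assoc, tensorHom_comp_pr1, reassoc_of% hd]

lemma comp_tensorHom_comp_pr2 {X Y Z : C} {d : Z ⟶ Z ⊗ Z} (hd : d ≫ pr2 hT Z Z = 𝟙 Z)
    (f : Z ⟶ X) (g : Z ⟶ Y) : (d ≫ (f ⊗ₘ g)) ≫ pr2 hT X Y = g := by
  rw [Category.assoc, tensorHom_comp_pr2, reassoc_of% hd]

lemma diag_comp_tensorHom_projections {Δ : ∀ X : C, X ⟶ X ⊗ X}
    (hnat : ∀ {X Y : C} (f : X ⟶ Y), f ≫ Δ Y = Δ X ≫ (f ⊗ₘ f)) {X Y Z : C}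
    (hsplit : Δ (X ⊗ Y) ≫ (pr1 hT X Y ⊗ₘ pr2 hT X Y) = 𝟙 (X ⊗ Y)) (h : Z ⟶ X ⊗ Y) :
    Δ Z ≫ ((h ≫ pr1 hT X Y) ⊗ₘ (h ≫ pr2 hT X Y)) = h := by
  rw [← tensorHom_comp_tensorHom, ← Category.assoc, ← hnat, Category.assoc, hsplit,
    Category.comp_id]

lemma tensorIsProduct_of_diag {Δ : ∀ X : C, X ⟶ X ⊗ X}
    (hnat : ∀ {X Y : C} (f : X ⟶ Y), f ≫ Δ Y = Δ X ≫ (f ⊗ₘ f))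
    (hc₁ : ∀ X : C, Δ X ≫ pr1 hT X X = 𝟙 X) (hc₂ : ∀ X : C, Δ X ≫ pr2 hT X X = 𝟙 X)
    (hsplit : ∀ X Y : C, Δ (X ⊗ Y) ≫ (pr1 hT X Y ⊗ₘ pr2 hT X Y) = 𝟙 (X ⊗ Y)) :
    TensorIsProduct hT := by
  intro X Y Z f g
  refine ⟨Δ Z ≫ (f ⊗ₘ g), ⟨comp_tensorHom_comp_pr1 (hc₁ Z) f g,
    comp_tensorHom_comp_pr2 (hc₂ Z) f g⟩, ?_⟩
  rintro h ⟨rfl, rfl⟩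
  exact (diag_comp_tensorHom_projections hnat (hsplit X Y) h).symm

end

/-- A semi-cartesian monoidal category is cartesian (i.e. `(X ⊗ Y, π¹, π²)` is a
binary product for all `X, Y`) if and only if there is a natural family of counital
morphisms `Δ_X : X ⟶ X ⊗ X` satisfying `(π¹_{XY} ⊗ π²_{XY}) ∘ Δ_{X⊗Y} = id_{X⊗Y}`. -/
theorem stmt2 (hT : IsTerminal (𝟙_ C)) :
    (∀ (X Y Z : C) (f : Z ⟶ X) (g : Z ⟶ Y), ∃! h : Z ⟶ X ⊗ Y,
        h ≫ pr1 hT X Y = f ∧ h ≫ pr2 hT X Y = g) ↔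
    ∃ Δ : ∀ X : C, X ⟶ X ⊗ X,
      (∀ {X Y : C} (f : X ⟶ Y), f ≫ Δ Y = Δ X ≫ (f ⊗ₘ f)) ∧
      (∀ X : C, Δ X ≫ (𝟙 X ⊗ₘ hT.from X) ≫ (ρ_ X).hom = 𝟙 X) ∧
      (∀ X : C, Δ X ≫ (hT.from X ⊗ₘ 𝟙 X) ≫ (λ_ X).hom = 𝟙 X) ∧
      (∀ X Y : C, Δ (X ⊗ Y) ≫ (pr1 hT X Y ⊗ₘ pr2 hT X Y) = 𝟙 (X ⊗ Y)) :=
  ⟨TensorIsProduct.exists_diag,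
    fun ⟨_, hnat, hc₁, hc₂, hsplit⟩ => tensorIsProduct_of_diag hnat hc₁ hc₂ hsplit⟩
end

section
/- Let X and Y be comonoids in a braided monoidal category C. The braiding σ_{X,Y} : X ⊗ Y → Y ⊗ X is a morphism of comonoids (with respect to the tensor product comonoid structures on X ⊗ Y and on Y ⊗ X) if and only if σ_{Y,X} ∘ σ_{X,Y} = id_{X⊗Y}, i.e., σ_{Y,X} = σ_{X,Y}⁻¹. -/
/-!
If `σ_{Y,X} ∘ σ_{X,Y} = id`, the braiding of `X ⊗ X` past `Y ⊗ Y` commutes with the middle-four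
interchanges, which is exactly compatibility of `σ_{X,Y}` with the comultiplications; compatibility
with the counits holds by naturality of the braiding alone. Conversely, applying the counits to the
two outer factors of both sides of the comultiplication condition, counitality turns the left side
into `σ_{Y,X} ∘ σ_{X,Y}` and the right side into the identity.
-/

open CategoryTheory CategoryTheory.Limits MonoidalCategory

variable {C : Type*} [Category C] [MonoidalCategory C] [BraidedCategory C]

/-- `(X, Δ, ε)` is a comonoid: `Δ` is coassociative and counital. -/
def IsComon (X : C) (Δ : X ⟶ X ⊗ X) (ε : X ⟶ 𝟙_ C) : Prop :=
  Δ ≫ (Δ ⊗ₘ 𝟙 X) ≫ (α_ X X X).hom = Δ ≫ (𝟙 X ⊗ₘ Δ) ∧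
  Δ ≫ (ε ⊗ₘ 𝟙 X) ≫ (λ_ X).hom = 𝟙 X ∧
  Δ ≫ (𝟙 X ⊗ₘ ε) ≫ (ρ_ X).hom = 𝟙 X

/-- Comultiplication of the tensor product comonoid. -/
def tensΔ {X Y : C} (ΔX : X ⟶ X ⊗ X) (ΔY : Y ⟶ Y ⊗ Y) :
    X ⊗ Y ⟶ (X ⊗ Y) ⊗ (X ⊗ Y) :=
  (ΔX ⊗ₘ ΔY) ≫ tensorμ X X Y Y

/-- Counit of the tensor product comonoid. -/
def tensε {X Y : C} (εX : X ⟶ 𝟙_ C) (εY : Y ⟶ 𝟙_ C) : X ⊗ Y ⟶ 𝟙_ C :=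
  (εX ⊗ₘ εY) ≫ (λ_ (𝟙_ C)).hom

def keepOuter {X Y : C} (εX : X ⟶ 𝟙_ C) (εY : Y ⟶ 𝟙_ C) : (X ⊗ Y) ⊗ (X ⊗ Y) ⟶ X ⊗ Y :=
  ((𝟙 X ⊗ₘ εY) ⊗ₘ (εX ⊗ₘ 𝟙 Y)) ≫ ((ρ_ X).hom ⊗ₘ (λ_ Y).hom)

def keepInner {X Y : C} (εX : X ⟶ 𝟙_ C) (εY : Y ⟶ 𝟙_ C) : (X ⊗ Y) ⊗ (X ⊗ Y) ⟶ Y ⊗ X :=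
  ((εX ⊗ₘ 𝟙 Y) ⊗ₘ (𝟙 X ⊗ₘ εY)) ≫ ((λ_ Y).hom ⊗ₘ (ρ_ X).hom)

lemma tensorμ_unit_left_right (X Y : C) :
    tensorμ X (𝟙_ C) (𝟙_ C) Y ≫ ((ρ_ X).hom ⊗ₘ (λ_ Y).hom) = (ρ_ X).hom ⊗ₘ (λ_ Y).hom := by
  simp only [tensorμ, MonoidalCategory.tensorHom_def, braiding_tensorUnit_left]
  monoidal

lemma tensorμ_unit_right_left (X Y : C) :
    tensorμ (𝟙_ C) X Y (𝟙_ C) ≫ ((λ_ Y).hom ⊗ₘ (ρ_ X).hom) =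
      ((λ_ X).hom ⊗ₘ (ρ_ Y).hom) ≫ (β_ X Y).hom := by
  simp only [tensorμ, MonoidalCategory.tensorHom_def]
  monoidal

variable {X Y : C} {ΔX : X ⟶ X ⊗ X} {εX : X ⟶ 𝟙_ C} {ΔY : Y ⟶ Y ⊗ Y} {εY : Y ⟶ 𝟙_ C}

lemma tensΔ_keepOuter (hX : ΔX ≫ (𝟙 X ⊗ₘ εX) ≫ (ρ_ X).hom = 𝟙 X)
    (hY : ΔY ≫ (εY ⊗ₘ 𝟙 Y) ≫ (λ_ Y).hom = 𝟙 Y) :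
    tensΔ ΔX ΔY ≫ keepOuter εX εY = 𝟙 (X ⊗ Y) := by
  rw [tensΔ, keepOuter, Category.assoc, ← tensorμ_natural_assoc, tensorμ_unit_left_right,
    tensorHom_comp_tensorHom, tensorHom_comp_tensorHom, hX, hY, id_tensorHom_id]

lemma tensΔ_keepInner (hX : ΔX ≫ (εX ⊗ₘ 𝟙 X) ≫ (λ_ X).hom = 𝟙 X)
    (hY : ΔY ≫ (𝟙 Y ⊗ₘ εY) ≫ (ρ_ Y).hom = 𝟙 Y) :
    tensΔ ΔX ΔY ≫ keepInner εX εY = (β_ X Y).hom := by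
  rw [tensΔ, keepInner, Category.assoc, ← tensorμ_natural_assoc, tensorμ_unit_right_left]
  simp only [← Category.assoc, tensorHom_comp_tensorHom]
  simp only [Category.assoc, hX, hY, id_tensorHom_id, Category.id_comp]

lemma braiding_comp_tensorHom_id_leftUnitor (f : Y ⟶ 𝟙_ C) :
    (β_ X Y).hom ≫ (f ⊗ₘ 𝟙 X) ≫ (λ_ X).hom = (𝟙 X ⊗ₘ f) ≫ (ρ_ X).hom := by
  rw [← BraidedCategory.braiding_naturality_assoc, braiding_tensorUnit_right]
  simp

lemma braiding_comp_id_tensorHom_rightUnitor (f : X ⟶ 𝟙_ C) :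
    (β_ X Y).hom ≫ (𝟙 Y ⊗ₘ f) ≫ (ρ_ Y).hom = (f ⊗ₘ 𝟙 Y) ≫ (λ_ Y).hom := by
  rw [← BraidedCategory.braiding_naturality_assoc, braiding_tensorUnit_left]
  simp

lemma braiding_tensor_braiding_keepInner :
    ((β_ X Y).hom ⊗ₘ (β_ X Y).hom) ≫ keepInner εY εX = keepOuter εX εY := by
  rw [keepInner, keepOuter, tensorHom_comp_tensorHom, tensorHom_comp_tensorHom,
    braiding_comp_tensorHom_id_leftUnitor, braiding_comp_id_tensorHom_rightUnitor,
    tensorHom_comp_tensorHom]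

lemma braiding_comp_tensε :
    (β_ X Y).hom ≫ tensε εY εX = tensε εX εY := by
  rw [tensε, tensε, ← BraidedCategory.braiding_naturality_assoc, braiding_tensorUnit_left,
    unitors_equal]
  simp

lemma braiding_comp_tensorμ_of_symmetric (h : (β_ X Y).hom ≫ (β_ Y X).hom = 𝟙 (X ⊗ Y)) :
    (β_ (X ⊗ X) (Y ⊗ Y)).hom ≫ tensorμ Y Y X X =
      tensorμ X X Y Y ≫ ((β_ X Y).hom ⊗ₘ (β_ X Y).hom) := by
  have hinv : (β_ Y X).inv = (β_ X Y).hom := by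
    rw [← cancel_mono (β_ Y X).hom, Iso.inv_hom_id, h]
  have : IsIso (tensorδ Y Y X X) := ⟨_, tensorδ_tensorμ .., tensorμ_tensorδ ..⟩
  -- Moving `tensorμ Y Y X X` across turns its crossing `β_ Y X` into `(β_ Y X).inv = β_ X Y`;
  -- then both sides consist of the same four crossings `β_ X Y`.
  rw [← cancel_mono (tensorδ Y Y X X), Category.assoc, tensorμ_tensorδ, Category.comp_id]
  simp only [tensorδ, hinv, tensorμ, MonoidalCategory.tensorHom_def,
    BraidedCategory.braiding_tensor_left_hom, BraidedCategory.braiding_tensor_right_hom]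
  monoidal

lemma braiding_comp_tensΔ_of_symmetric (h : (β_ X Y).hom ≫ (β_ Y X).hom = 𝟙 (X ⊗ Y)) :
    (β_ X Y).hom ≫ tensΔ ΔY ΔX = tensΔ ΔX ΔY ≫ ((β_ X Y).hom ⊗ₘ (β_ X Y).hom) := by
  rw [tensΔ, tensΔ, ← BraidedCategory.braiding_naturality_assoc,
    braiding_comp_tensorμ_of_symmetric h, Category.assoc]

/-- For comonoids `X, Y` in a braided monoidal category, the braiding
`σ_{X,Y} : X ⊗ Y ⟶ Y ⊗ X` is a morphism of comonoids (for the tensor product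
comonoid structures) if and only if `σ_{Y,X} ∘ σ_{X,Y} = id_{X⊗Y}`. -/
theorem stmt6 (X Y : C) (ΔX : X ⟶ X ⊗ X) (εX : X ⟶ 𝟙_ C)
    (ΔY : Y ⟶ Y ⊗ Y) (εY : Y ⟶ 𝟙_ C)
    (hX : IsComon X ΔX εX) (hY : IsComon Y ΔY εY) :
    ((β_ X Y).hom ≫ tensΔ ΔY ΔX =
        tensΔ ΔX ΔY ≫ ((β_ X Y).hom ⊗ₘ (β_ X Y).hom) ∧
      (β_ X Y).hom ≫ tensε εY εX = tensε εX εY) ↔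
    (β_ X Y).hom ≫ (β_ Y X).hom = 𝟙 (X ⊗ Y) := by
  refine ⟨fun ⟨hΔ, _⟩ => ?_, fun h => ⟨braiding_comp_tensΔ_of_symmetric h, braiding_comp_tensε⟩⟩
  have := hΔ =≫ keepInner εY εX
  rwa [Category.assoc, tensΔ_keepInner hY.2.1 hX.2.2, Category.assoc,
    braiding_tensor_braiding_keepInner, tensΔ_keepOuter hX.2.2 hY.2.1] at this
end

section
/- Let C be a braided monoidal category, X an object of C, and Δ, δ : X → X ⊗ X two morphisms that are counital with respect to morphisms ε, ε' : X → 𝟙 respectively (i.e., (id_X ⊗ ε) ∘ Δ = id_X = (ε ⊗ id_X) ∘ Δ and similarly for (δ, ε')), and which satisfy the exchange law (δ ⊗ δ) ∘ Δ = (id_X ⊗ σ_{X,X} ⊗ id_X) ∘ (Δ ⊗ Δ) ∘ δ. Then ε = ε', Δ = δ, and Δ is coassociative and cocommutative (σ_{X,X} ∘ Δ = Δ), so (X, Δ, ε) is a cocommutative comonoid. -/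
/-!
This is the Eckmann–Hilton argument. Postcomposing the exchange law with `(a ⊗ b) ⊗ (c ⊗ d)`,
where each of `a, b, c, d` is a counit or an identity, the counit laws collapse both sides to
coherence isomorphisms applied to a single morphism. The choices `(ε', ε, ε, ε')` and
`(𝟙, ε, ε, 𝟙)` give `ε = ε'` and `Δ = δ`; after that the exchange law relates `Δ` to itself, and
`(ε, 𝟙, 𝟙, ε)` and `(𝟙, 𝟙, ε, 𝟙)` give cocommutativity and coassociativity.
-/

open CategoryTheory MonoidalCategory

variable {C : Type*} [Category C] [MonoidalCategory C] [BraidedCategory C]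

theorem comp_tensorHom_of_leftCounit {C : Type*} [Category C] [MonoidalCategory C]
    {X Y : C} {c : X ⟶ X ⊗ X} {e : X ⟶ 𝟙_ C}
    (h : c ≫ (e ⊗ₘ 𝟙 X) ≫ (λ_ X).hom = 𝟙 X) (f : X ⟶ Y) :
    c ≫ (e ⊗ₘ f) = f ≫ (λ_ Y).inv := by
  have hc : c ≫ e ▷ X = (λ_ X).inv := by
    simpa [← cancel_mono (λ_ X).hom] using h
  rw [MonoidalCategory.tensorHom_def, reassoc_of% hc, leftUnitor_inv_naturality]

theorem comp_tensorHom_of_rightCounit {C : Type*} [Category C] [MonoidalCategory C]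
    {X Y : C} {c : X ⟶ X ⊗ X} {e : X ⟶ 𝟙_ C}
    (h : c ≫ (𝟙 X ⊗ₘ e) ≫ (ρ_ X).hom = 𝟙 X) (f : X ⟶ Y) :
    c ≫ (f ⊗ₘ e) = f ≫ (ρ_ Y).inv := by
  have hc : c ≫ X ◁ e = (ρ_ X).inv := by
    simpa [← cancel_mono (ρ_ X).hom] using h
  rw [MonoidalCategory.tensorHom_def', reassoc_of% hc, rightUnitor_inv_naturality]

theorem rightUnitor_inv_tensorHom_leftUnitor_inv_tensorμ (X Y : C) :
    ((ρ_ X).inv ⊗ₘ (λ_ Y).inv) ≫ tensorμ X (𝟙_ C) (𝟙_ C) Y = (ρ_ X).inv ⊗ₘ (λ_ Y).inv := by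
  rw [tensorμ, braiding_tensorUnit_left]; monoidal

theorem leftUnitor_inv_tensorHom_rightUnitor_inv_tensorμ (X Y : C) :
    ((λ_ X).inv ⊗ₘ (ρ_ Y).inv) ≫ tensorμ (𝟙_ C) X Y (𝟙_ C) =
      (β_ X Y).hom ≫ ((λ_ Y).inv ⊗ₘ (ρ_ X).inv) := by
  rw [tensorμ]; monoidal

theorem rightUnitor_inv_whiskerRight_tensorμ (X Y Z : C) :
    (ρ_ X).inv ▷ (Y ⊗ Z) ≫ tensorμ X (𝟙_ C) Y Z = (α_ X Y Z).inv ≫ (X ⊗ Y) ◁ (λ_ Z).inv := by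
  rw [tensorμ, braiding_tensorUnit_left]; monoidal

theorem comp_tensorHom_tensorHom_of_exchange {X A B D E : C} {Δ δ : X ⟶ X ⊗ X}
    (h : Δ ≫ (δ ⊗ₘ δ) = δ ≫ (Δ ⊗ₘ Δ) ≫ tensorμ X X X X)
    (a : X ⟶ A) (b : X ⟶ B) (d : X ⟶ D) (e : X ⟶ E) :
    Δ ≫ ((δ ≫ (a ⊗ₘ b)) ⊗ₘ (δ ≫ (d ⊗ₘ e))) =
      δ ≫ ((Δ ≫ (a ⊗ₘ d)) ⊗ₘ (Δ ≫ (b ⊗ₘ e))) ≫ tensorμ A D B E := by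
  rw [← tensorHom_comp_tensorHom, reassoc_of% h, ← tensorHom_comp_tensorHom, Category.assoc,
    tensorμ_natural]

section Exchange

variable {X : C} {Δ δ : X ⟶ X ⊗ X} {ε ε' : X ⟶ 𝟙_ C}

theorem counit_eq_of_exchange
    (hΔl : Δ ≫ (ε ⊗ₘ 𝟙 X) ≫ (λ_ X).hom = 𝟙 X) (hΔr : Δ ≫ (𝟙 X ⊗ₘ ε) ≫ (ρ_ X).hom = 𝟙 X)
    (hδl : δ ≫ (ε' ⊗ₘ 𝟙 X) ≫ (λ_ X).hom = 𝟙 X) (hδr : δ ≫ (𝟙 X ⊗ₘ ε') ≫ (ρ_ X).hom = 𝟙 X)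
    (h : Δ ≫ (δ ⊗ₘ δ) = δ ≫ (Δ ⊗ₘ Δ) ≫ tensorμ X X X X) : ε = ε' := by
  have key := comp_tensorHom_tensorHom_of_exchange h ε' ε ε ε'
  rw [comp_tensorHom_of_leftCounit hδl, comp_tensorHom_of_rightCounit hδr,
    comp_tensorHom_of_rightCounit hΔr, comp_tensorHom_of_leftCounit hΔl,
    ← tensorHom_comp_tensorHom, ← tensorHom_comp_tensorHom, Category.assoc,
    reassoc_of% comp_tensorHom_of_rightCounit hΔr, reassoc_of% comp_tensorHom_of_rightCounit hδr,
    rightUnitor_inv_tensorHom_leftUnitor_inv_tensorμ, unitors_inv_equal] at key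
  simpa [cancel_mono] using key

theorem comul_eq_of_exchange
    (hΔl : Δ ≫ (ε ⊗ₘ 𝟙 X) ≫ (λ_ X).hom = 𝟙 X) (hΔr : Δ ≫ (𝟙 X ⊗ₘ ε) ≫ (ρ_ X).hom = 𝟙 X)
    (hδl : δ ≫ (ε ⊗ₘ 𝟙 X) ≫ (λ_ X).hom = 𝟙 X) (hδr : δ ≫ (𝟙 X ⊗ₘ ε) ≫ (ρ_ X).hom = 𝟙 X)
    (h : Δ ≫ (δ ⊗ₘ δ) = δ ≫ (Δ ⊗ₘ Δ) ≫ tensorμ X X X X) : Δ = δ := by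
  have key := comp_tensorHom_tensorHom_of_exchange h (𝟙 X) ε ε (𝟙 X)
  rw [comp_tensorHom_of_leftCounit hδl, comp_tensorHom_of_rightCounit hδr,
    comp_tensorHom_of_rightCounit hΔr, comp_tensorHom_of_leftCounit hΔl,
    Category.id_comp, Category.id_comp, rightUnitor_inv_tensorHom_leftUnitor_inv_tensorμ] at key
  simpa [cancel_mono] using key

theorem comul_braiding_of_exchange
    (hΔl : Δ ≫ (ε ⊗ₘ 𝟙 X) ≫ (λ_ X).hom = 𝟙 X) (hΔr : Δ ≫ (𝟙 X ⊗ₘ ε) ≫ (ρ_ X).hom = 𝟙 X)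
    (h : Δ ≫ (Δ ⊗ₘ Δ) = Δ ≫ (Δ ⊗ₘ Δ) ≫ tensorμ X X X X) : Δ ≫ (β_ X X).hom = Δ := by
  have key := comp_tensorHom_tensorHom_of_exchange h ε (𝟙 X) (𝟙 X) ε
  rw [comp_tensorHom_of_leftCounit hΔl, comp_tensorHom_of_rightCounit hΔr,
    Category.id_comp, Category.id_comp, leftUnitor_inv_tensorHom_rightUnitor_inv_tensorμ] at key
  rwa [← Category.assoc, cancel_mono, eq_comm] at key

theorem comul_assoc_of_exchange
    (hΔl : Δ ≫ (ε ⊗ₘ 𝟙 X) ≫ (λ_ X).hom = 𝟙 X) (hΔr : Δ ≫ (𝟙 X ⊗ₘ ε) ≫ (ρ_ X).hom = 𝟙 X)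
    (h : Δ ≫ (Δ ⊗ₘ Δ) = Δ ≫ (Δ ⊗ₘ Δ) ≫ tensorμ X X X X) :
    Δ ≫ (Δ ⊗ₘ 𝟙 X) ≫ (α_ X X X).hom = Δ ≫ (𝟙 X ⊗ₘ Δ) := by
  have key := comp_tensorHom_tensorHom_of_exchange h (𝟙 X) (𝟙 X) ε (𝟙 X)
  rw [comp_tensorHom_of_leftCounit hΔl, comp_tensorHom_of_rightCounit hΔr, id_tensorHom_id,
    Category.comp_id, Category.id_comp, Category.id_comp, MonoidalCategory.tensorHom_def,
    MonoidalCategory.tensorHom_def', Category.assoc, rightUnitor_inv_whiskerRight_tensorμ,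
    ← Category.assoc, ← Category.assoc, ← Category.assoc, cancel_mono] at key
  simp [reassoc_of% key]

end Exchange

/-- Hilton–Eckmann argument: if `Δ, δ : X ⟶ X ⊗ X` are counital with counits
`ε, ε'` respectively and satisfy the exchange law
`(δ ⊗ δ) ∘ Δ = (id ⊗ σ_{X,X} ⊗ id) ∘ (Δ ⊗ Δ) ∘ δ`, then `ε = ε'`, `Δ = δ`, and `Δ` is
coassociative and cocommutative, so `(X, Δ, ε)` is a cocommutative comonoid. -/
theorem stmt7 (X : C) (Δ δ : X ⟶ X ⊗ X) (ε ε' : X ⟶ 𝟙_ C)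
    (hΔl : Δ ≫ (ε ⊗ₘ 𝟙 X) ≫ (λ_ X).hom = 𝟙 X)
    (hΔr : Δ ≫ (𝟙 X ⊗ₘ ε) ≫ (ρ_ X).hom = 𝟙 X)
    (hδl : δ ≫ (ε' ⊗ₘ 𝟙 X) ≫ (λ_ X).hom = 𝟙 X)
    (hδr : δ ≫ (𝟙 X ⊗ₘ ε') ≫ (ρ_ X).hom = 𝟙 X)
    (hexchange : Δ ≫ (δ ⊗ₘ δ) = δ ≫ (Δ ⊗ₘ Δ) ≫ tensorμ X X X X) :
    ε = ε' ∧ Δ = δ ∧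
    Δ ≫ (Δ ⊗ₘ 𝟙 X) ≫ (α_ X X X).hom = Δ ≫ (𝟙 X ⊗ₘ Δ) ∧
    Δ ≫ (β_ X X).hom = Δ := by
  obtain rfl : ε = ε' := counit_eq_of_exchange hΔl hΔr hδl hδr hexchange
  obtain rfl : Δ = δ := comul_eq_of_exchange hΔl hΔr hδl hδr hexchange
  exact ⟨rfl, rfl, comul_assoc_of_exchange hΔl hΔr hexchange,
    comul_braiding_of_exchange hΔl hΔr hexchange⟩
end

section
/- Let X and Y be cocommutative comonoids in a braided monoidal category C. The tensor product comonoid X ⊗ Y is cocommutative if and only if σ_{Y,X} ∘ σ_{X,Y} = id_{X⊗Y}, i.e., σ_{Y,X} = σ_{X,Y}⁻¹. -/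
/-!
If `σ_{Y,X} ∘ σ_{X,Y} = id`, the braiding of `(X ⊗ Y) ⊗ (X ⊗ Y)` can be pulled through the middle
interchange `tensorμ`, where it becomes `σ_{X,X} ⊗ σ_{Y,Y}`, which fixes `Δ_X ⊗ Δ_Y`. Conversely,
applying counits to the two inner factors of `Δ_{X⊗Y}` gives the identity, applying them to the
two outer factors gives `σ_{X,Y}`, and the braiding exchanges these two projections up to
`σ_{Y,X}`; so if `Δ_{X⊗Y}` is invariant under the braiding then `σ_{Y,X} ∘ σ_{X,Y} = id`.
-/

open CategoryTheory CategoryTheory.Limits MonoidalCategory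

variable {C : Type*} [Category C] [MonoidalCategory C] [BraidedCategory C]

omit [BraidedCategory C] in
lemma IsComon.comul_counit_tensor_id {X : C} {Δ : X ⟶ X ⊗ X} {ε : X ⟶ 𝟙_ C}
    (h : IsComon X Δ ε) : Δ ≫ (ε ⊗ₘ 𝟙 X) = (λ_ X).inv :=
  (Iso.comp_hom_eq_id _).mp (by rw [Category.assoc, h.2.1])

omit [BraidedCategory C] in
lemma IsComon.comul_id_tensor_counit {X : C} {Δ : X ⟶ X ⊗ X} {ε : X ⟶ 𝟙_ C}
    (h : IsComon X Δ ε) : Δ ≫ (𝟙 X ⊗ₘ ε) = (ρ_ X).inv :=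
  (Iso.comp_hom_eq_id _).mp (by rw [Category.assoc, h.2.2])

lemma tensorμ_tensorUnit_tensorUnit (X Y : C) : tensorμ X (𝟙_ C) (𝟙_ C) Y = 𝟙 _ := by
  rw [tensorμ, braiding_tensorUnit_left]
  monoidal

lemma tensorμ_tensorUnit_left_right (X Y : C) :
    tensorμ (𝟙_ C) X Y (𝟙_ C) =
      ((λ_ X).hom ⊗ₘ (ρ_ Y).hom) ≫ (β_ X Y).hom ≫ ((λ_ Y).inv ⊗ₘ (ρ_ X).inv) := by
  rw [tensorμ, MonoidalCategory.whiskerRight_id, id_whiskerLeft]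
  monoidal

/-- Comparing braid diagrams, the strands `X₂` and `Y₁` cross twice on the left and not at all on
the right; every other crossing matches. -/
lemma tensorμ_comp_braiding {X₁ X₂ Y₁ Y₂ : C}
    (h : (β_ X₂ Y₁).hom ≫ (β_ Y₁ X₂).hom = 𝟙 _) :
    tensorμ X₁ X₂ Y₁ Y₂ ≫ (β_ (X₁ ⊗ Y₁) (X₂ ⊗ Y₂)).hom =
      ((β_ X₁ X₂).hom ⊗ₘ (β_ Y₁ Y₂).hom) ≫ tensorμ X₂ X₁ Y₂ Y₁ := by
  simp only [tensorμ, Category.assoc,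
    BraidedCategory.braiding_tensor_right_hom, BraidedCategory.braiding_tensor_left_hom,
    comp_whiskerRight, whisker_assoc, MonoidalCategory.whiskerLeft_comp, pentagon_assoc,
    pentagon_inv_hom_hom_hom_inv_assoc, Iso.inv_hom_id_assoc, whiskerLeft_hom_inv_assoc]
  slice_lhs 3 4 =>
    rw [← MonoidalCategory.whiskerLeft_comp, ← comp_whiskerRight, h]
  rw [id_whiskerRight, MonoidalCategory.whiskerLeft_id, MonoidalCategory.tensorHom_def]
  monoidal

section TensorComul

variable {X Y : C} {ΔX : X ⟶ X ⊗ X} {εX : X ⟶ 𝟙_ C} {ΔY : Y ⟶ Y ⊗ Y} {εY : Y ⟶ 𝟙_ C}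

lemma tensΔ_comp_counit_inner (hX : ΔX ≫ (𝟙 X ⊗ₘ εX) = (ρ_ X).inv)
    (hY : ΔY ≫ (εY ⊗ₘ 𝟙 Y) = (λ_ Y).inv) :
    tensΔ ΔX ΔY ≫ ((𝟙 X ⊗ₘ εY) ⊗ₘ (εX ⊗ₘ 𝟙 Y)) ≫ ((ρ_ X).hom ⊗ₘ (λ_ Y).hom) = 𝟙 (X ⊗ Y) := by
  rw [tensΔ, Category.assoc, ← tensorμ_natural_assoc, tensorHom_comp_tensorHom_assoc, hX, hY,
    tensorμ_tensorUnit_tensorUnit, Category.id_comp, tensorHom_comp_tensorHom, Iso.inv_hom_id,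
    Iso.inv_hom_id, id_tensorHom_id]

lemma tensΔ_comp_counit_outer (hX : ΔX ≫ (εX ⊗ₘ 𝟙 X) = (λ_ X).inv)
    (hY : ΔY ≫ (𝟙 Y ⊗ₘ εY) = (ρ_ Y).inv) :
    tensΔ ΔX ΔY ≫ ((εX ⊗ₘ 𝟙 Y) ⊗ₘ (𝟙 X ⊗ₘ εY)) ≫ ((λ_ Y).hom ⊗ₘ (ρ_ X).hom) = (β_ X Y).hom := by
  rw [tensΔ, Category.assoc, ← tensorμ_natural_assoc, tensorHom_comp_tensorHom_assoc, hX, hY,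
    tensorμ_tensorUnit_left_right]
  simp only [Category.assoc, tensorHom_comp_tensorHom, tensorHom_comp_tensorHom_assoc,
    Iso.inv_hom_id, id_tensorHom_id, Category.id_comp, Category.comp_id]

end TensorComul

/-- For cocommutative comonoids `X, Y` in a braided monoidal category, the tensor
product comonoid `X ⊗ Y` is cocommutative if and only if
`σ_{Y,X} ∘ σ_{X,Y} = id_{X⊗Y}`, i.e. `σ_{Y,X} = σ_{X,Y}⁻¹`. -/
theorem stmt11 (X Y : C) (ΔX : X ⟶ X ⊗ X) (εX : X ⟶ 𝟙_ C)
    (ΔY : Y ⟶ Y ⊗ Y) (εY : Y ⟶ 𝟙_ C)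
    (hX : IsComon X ΔX εX) (hY : IsComon Y ΔY εY)
    (hXc : ΔX ≫ (β_ X X).hom = ΔX) (hYc : ΔY ≫ (β_ Y Y).hom = ΔY) :
    tensΔ ΔX ΔY ≫ (β_ (X ⊗ Y) (X ⊗ Y)).hom = tensΔ ΔX ΔY ↔
    (β_ X Y).hom ≫ (β_ Y X).hom = 𝟙 (X ⊗ Y) := by
  constructor
  · intro hcomm
    calc (β_ X Y).hom ≫ (β_ Y X).hom
        = tensΔ ΔX ΔY ≫ ((εX ⊗ₘ 𝟙 Y) ⊗ₘ (𝟙 X ⊗ₘ εY)) ≫ ((λ_ Y).hom ⊗ₘ (ρ_ X).hom) ≫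
            (β_ Y X).hom := by
          rw [← tensΔ_comp_counit_outer hX.comul_counit_tensor_id hY.comul_id_tensor_counit]
          simp only [Category.assoc]
      _ = tensΔ ΔX ΔY ≫ (β_ (X ⊗ Y) (X ⊗ Y)).hom ≫ ((𝟙 X ⊗ₘ εY) ⊗ₘ (εX ⊗ₘ 𝟙 Y)) ≫
            ((ρ_ X).hom ⊗ₘ (λ_ Y).hom) := by
          rw [BraidedCategory.braiding_naturality, BraidedCategory.braiding_naturality_assoc]
      _ = 𝟙 (X ⊗ Y) := by
          rw [reassoc_of% hcomm,
            tensΔ_comp_counit_inner hX.comul_id_tensor_counit hY.comul_counit_tensor_id]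
  · intro h
    rw [tensΔ, Category.assoc, tensorμ_comp_braiding h, tensorHom_comp_tensorHom_assoc, hXc, hYc]
end

section
/- Let R be a commutative ring and H a Hopf algebra over R, with comultiplication Δ : H → H ⊗_R H and multiplication μ : H ⊗_R H → H. If the R-linear map μ ∘ Δ : H → H (in Sweedler notation, a ↦ a₍₁₎a₍₂₎) is multiplicative, i.e., (μ ∘ Δ)(ab) = (μ ∘ Δ)(a) · (μ ∘ Δ)(b) for all a, b ∈ H, then H is commutative: ab = ba for all a, b ∈ H. -/
/-!
Work in the convolution monoid of linear maps `H ⊗ H → H` and put `p = id ⊗ ε`, `q = ε ⊗ id`.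
Then `p * q = μ` and `q * p = μᵒᵖ`, and `p`, `q` are invertible (with inverses `S ⊗ ε`, `ε ⊗ S`),
since precomposition with a coalgebra map is multiplicative for convolution. As `μ` is a coalgebra
map, `(μ ∘ Δ) ∘ μ = μ * μ = (p * q) ^ 2`, while `x ⊗ y ↦ (μ Δ x) (μ Δ y)` is `p ^ 2 * q ^ 2`.
So multiplicativity of `μ ∘ Δ` says `(p * q) ^ 2 = p ^ 2 * q ^ 2`, whence `q * p = p * q`,
that is `μᵒᵖ = μ`.
-/

open Coalgebra TensorProduct WithConv

theorem IsUnit.commute_of_mul_sq_eq {M : Type*} [Monoid M] {p q : M} (hp : IsUnit p)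
    (hq : IsUnit q) (h : (p * q) ^ 2 = p ^ 2 * q ^ 2) : Commute p q := by
  simp only [sq, mul_assoc] at h
  exact (hq.mul_right_cancel (by simpa only [mul_assoc] using hp.mul_left_cancel h)).symm

lemma Coalgebra.sum_counit_right_smul {R C ι : Type*} [CommSemiring R] [AddCommMonoid C]
    [Module R C] [Coalgebra R C] {x : C} (𝓡 : Repr R x ι) :
    ∑ i ∈ 𝓡.index, counit (R := R) (𝓡.right i) • 𝓡.left i = x := by
  simpa only [map_sum, _root_.TensorProduct.rid_tmul, one_smul]
    using congr(_root_.TensorProduct.rid R C $(sum_tmul_counit_eq 𝓡))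

namespace CoalgHom
variable {R A B C : Type*} [CommSemiring R] [Semiring A] [Algebra R A]
  [AddCommMonoid B] [Module R B] [Coalgebra R B] [AddCommMonoid C] [Module R C] [Coalgebra R C]

def precompConv (h : B →ₗc[R] C) : WithConv (C →ₗ[R] A) →* WithConv (B →ₗ[R] A) where
  toFun f := toConv (f.ofConv ∘ₗ h.toLinearMap)
  map_one' := by ext; simp
  map_mul' f g := ofConv_injective (LinearMap.convMul_comp_coalgHom_distrib f g h)

@[simp] lemma precompConv_apply (h : B →ₗc[R] C) (f : WithConv (C →ₗ[R] A)) (x : B) :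
    precompConv h f x = f (h x) := rfl

end CoalgHom

namespace Coalgebra.TensorProduct
variable {R A C D : Type*} [CommSemiring R] [Semiring A] [Algebra R A]
  [AddCommMonoid C] [Module R C] [Coalgebra R C] [AddCommMonoid D] [Module R D] [Coalgebra R D]

variable (R C D) in
noncomputable def fst : C ⊗[R] D →ₗc[R] C :=
  (Coalgebra.TensorProduct.rid R R C).toCoalgHom.comp
    (Coalgebra.TensorProduct.map (CoalgHom.id R C) (counitCoalgHom R D))

variable (R C D) in
noncomputable def snd : C ⊗[R] D →ₗc[R] D :=
  (Coalgebra.TensorProduct.lid R D).toCoalgHom.comp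
    (Coalgebra.TensorProduct.map (counitCoalgHom R C) (CoalgHom.id R D))

@[simp] lemma fst_tmul (x : C) (y : D) : fst R C D (x ⊗ₜ y) = counit (R := R) y • x := rfl

@[simp] lemma snd_tmul (x : C) (y : D) : snd R C D (x ⊗ₜ y) = counit (R := R) x • y := rfl

lemma convMul_apply_tmul (F G : WithConv (C ⊗[R] D →ₗ[R] A)) (x : C) (y : D) :
    (F * G) (x ⊗ₜ y) = ∑ i ∈ (ℛ R x).index, ∑ j ∈ (ℛ R y).index,
      F ((ℛ R x).left i ⊗ₜ (ℛ R y).left j) * G ((ℛ R x).right i ⊗ₜ (ℛ R y).right j) := by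
  rw [LinearMap.convMul_apply, comul_tmul, ← (ℛ R x).eq, ← (ℛ R y).eq]
  simp only [sum_tmul, tmul_sum, map_sum, AlgebraTensorModule.tensorTensorTensorComm_tmul,
    _root_.TensorProduct.map_tmul, LinearMap.mul'_apply]
  exact Finset.sum_comm

lemma convMul_fst_snd (f : WithConv (C →ₗ[R] A)) (g : WithConv (D →ₗ[R] A)) (x : C) (y : D) :
    (CoalgHom.precompConv (fst R C D) f * CoalgHom.precompConv (snd R C D) g) (x ⊗ₜ y) =
      f x * g y := by
  conv_rhs => rw [← sum_counit_right_smul (ℛ R x), ← sum_counit_smul (ℛ R y)]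
  simp only [convMul_apply_tmul, CoalgHom.precompConv_apply, fst_tmul, snd_tmul, map_sum,
    map_smul, Finset.sum_mul_sum, smul_mul_smul_comm, mul_comm]

lemma convMul_snd_fst (f : WithConv (C →ₗ[R] A)) (g : WithConv (D →ₗ[R] A)) (x : C) (y : D) :
    (CoalgHom.precompConv (snd R C D) g * CoalgHom.precompConv (fst R C D) f) (x ⊗ₜ y) =
      g y * f x := by
  conv_rhs => rw [← sum_counit_right_smul (ℛ R y), ← sum_counit_smul (ℛ R x)]
  simp only [convMul_apply_tmul, CoalgHom.precompConv_apply, fst_tmul, snd_tmul, map_sum,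
    map_smul, Finset.sum_mul_sum, smul_mul_smul_comm, mul_comm]
  exact Finset.sum_comm

end Coalgebra.TensorProduct

lemma HopfAlgebra.isUnit_toConv_id {R H : Type*} [CommSemiring R] [Semiring H]
    [HopfAlgebra R H] : IsUnit (toConv (LinearMap.id : H →ₗ[R] H)) :=
  ⟨⟨_, _, LinearMap.id_mul_antipode, LinearMap.antipode_mul_id⟩, rfl⟩

open Bialgebra Coalgebra.TensorProduct

/-- If `H` is a Hopf algebra over a commutative ring `R` and the `R`-linear map
`μ ∘ Δ : H → H` (in Sweedler notation `a ↦ a₍₁₎a₍₂₎`) is multiplicative, then `H`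
is commutative. -/
theorem stmt14 (R H : Type*) [CommRing R] [Ring H] [HopfAlgebra R H]
    (hmul : ∀ a b : H,
      LinearMap.mul' R H (Coalgebra.comul (R := R) (a * b)) =
        LinearMap.mul' R H (Coalgebra.comul (R := R) a) *
          LinearMap.mul' R H (Coalgebra.comul (R := R) b)) :
    ∀ a b : H, a * b = b * a := by
  set idH : WithConv (H →ₗ[R] H) := toConv LinearMap.id
  set p := CoalgHom.precompConv (fst R H H) idH
  set q := CoalgHom.precompConv (snd R H H) idH
  have hid_sq : ∀ x, (idH * idH) x = LinearMap.mul' R H (comul x) := by simp [idH]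
  have hμ : CoalgHom.precompConv (mulCoalgHom R H) idH = p * q := by
    ext x y
    exact (convMul_fst_snd idH idH x y).symm
  have hmul_conv : CoalgHom.precompConv (mulCoalgHom R H) (idH * idH) =
      CoalgHom.precompConv (fst R H H) (idH * idH) *
        CoalgHom.precompConv (snd R H H) (idH * idH) := by
    ext x y
    calc (idH * idH) (x * y) = (idH * idH) x * (idH * idH) y := by simp only [hid_sq, hmul]
      _ = _ := (convMul_fst_snd _ _ x y).symm
  rw [map_mul, map_mul, map_mul, hμ] at hmul_conv
  have hpq : Commute p q := (HopfAlgebra.isUnit_toConv_id.map _).commute_of_mul_sq_eq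
    (HopfAlgebra.isUnit_toConv_id.map _) (by simpa only [sq] using hmul_conv)
  intro a b
  calc a * b = (p * q) (a ⊗ₜ b) := (convMul_fst_snd idH idH a b).symm
    _ = (q * p) (a ⊗ₜ b) := by rw [hpq.eq]
    _ = b * a := convMul_snd_fst idH idH a b
end

section
/- Let a ∈ A^{⊗n}. Then a² = q·1 in A^{⊗n} if and only if there exist d ∈ {1, …, n}, a sign s ∈ {1, −1}, and an element f ∈ A^{⊗n} such that a = s·t_d + f·x_d. -/
open scoped TensorProduct

noncomputable section

/-- The free `ℤ`-algebra on two generators `ι 0` (playing the role of `t`)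
and `ι 1` (playing the role of `x`). -/
abbrev FreeTwo : Type := FreeAlgebra ℤ (Fin 2)

/-- The relations `t² = q`, `t·x = −x·t`, `x² = 0`. -/
inductive ARel (q : ℕ) : FreeTwo → FreeTwo → Prop
  | t_sq : ARel q (FreeAlgebra.ι ℤ (0 : Fin 2) * FreeAlgebra.ι ℤ (0 : Fin 2)) (q : FreeTwo)
  | t_x : ARel q (FreeAlgebra.ι ℤ (0 : Fin 2) * FreeAlgebra.ι ℤ (1 : Fin 2))
      (-(FreeAlgebra.ι ℤ (1 : Fin 2) * FreeAlgebra.ι ℤ (0 : Fin 2)))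
  | x_sq : ARel q (FreeAlgebra.ι ℤ (1 : Fin 2) * FreeAlgebra.ι ℤ (1 : Fin 2)) 0

/-- The ring `A`: the quotient of the free `ℤ`-algebra on `t, x` by the two-sided
ideal generated by `t² − q`, `t·x + x·t`, `x²`. -/
abbrev A (q : ℕ) : Type := RingQuot (ARel q)

/-- The generator `t` of `A`. -/
def tA (q : ℕ) : A q := RingQuot.mkRingHom (ARel q) (FreeAlgebra.ι ℤ (0 : Fin 2))

/-- The generator `x` of `A`. -/
def xA (q : ℕ) : A q := RingQuot.mkRingHom (ARel q) (FreeAlgebra.ι ℤ (1 : Fin 2))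

/-- The `n`-fold tensor power `A^{⊗ n}` over `ℤ`, a ring with componentwise
multiplication. -/
abbrev Tpow (q n : ℕ) : Type := ⨂[ℤ] (_ : Fin n), A q

/-- `t_i ∈ A^{⊗ n}`, the image of `t` under the `i`-th inclusion `A → A^{⊗ n}`. -/
def tI (q n : ℕ) (i : Fin n) : Tpow q n :=
  PiTensorProduct.tprod ℤ (fun j => if j = i then tA q else 1)

/-- `x_i ∈ A^{⊗ n}`, the image of `x` under the `i`-th inclusion `A → A^{⊗ n}`. -/
def xI (q n : ℕ) (i : Fin n) : Tpow q n :=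
  PiTensorProduct.tprod ℤ (fun j => if j = i then xA q else 1)

/-!
`A` is free over `ℤ` on the monomials `tᵃxᵇ` (`a, b ∈ ℤ/2`), and `tᵃxᵇ · tᶜxᵈ` is
`(-1)^{bc} q^{ac} tᵃ⁺ᶜ xᵇ⁺ᵈ`, or `0` when `b = d = 1`. Hence `A^{⊗n}` is free on the tensor
monomials indexed by `(ℤ/2 × ℤ/2)ⁿ` and multiplies through the product of these twists.

The constant coefficient of `a²` is `∑ q^{|g|} a_g²` over the `x`-free monomials `t^g`, a sum of
non-negative terms. If it equals `q`, then since `q ≥ 2` is not a square the `x`-free part of `a`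
is `s t_d` with `s = ±1`. Writing `a = s t_d + e`, the relation `s (t_d e + e t_d) + e² = 0` read at
the monomial `t_d m`, where `m` has no `x_d`, gives `2 s q^k e_m = -(e²)_{t_d m}`, and the right
side only involves coefficients of `e` at monomials with fewer `x`'s; by induction `e_m = 0`, so
`e = f x_d`. Conversely `x y x = 0` and `t y x + y x t = 0` for every `y ∈ A`, and these identities
pass to the `d`-th tensor slot.
-/

open Module PiTensorProduct

namespace PiTensorProduct

variable {ι R : Type*} {A : ι → Type*} [CommSemiring R] [∀ i, NonUnitalNonAssocSemiring (A i)]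
  [∀ i, Module R (A i)] [∀ i, SMulCommClass R (A i) (A i)] [∀ i, IsScalarTower R (A i) (A i)]

instance isScalarTower_self : IsScalarTower R (⨂[R] i, A i) (⨂[R] i, A i) :=
  ⟨fun r x y => by simp only [smul_eq_mul, mul_def, map_smul, LinearMap.smul_apply]⟩

instance smulCommClass_self : SMulCommClass R (⨂[R] i, A i) (⨂[R] i, A i) :=
  ⟨fun r x y => by simp only [smul_eq_mul, mul_def, map_smul]⟩

end PiTensorProduct

section TwistedBasis

variable {R S G : Type*} [CommSemiring R] [NonUnitalNonAssocSemiring S] [Module R S]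

def Module.Basis.IsTwisted [Add G] (b : Basis G R S) (κ : G → G → R) : Prop :=
  ∀ u v, b u * b v = κ u v • b (u + v)

variable [IsScalarTower R S S] [SMulCommClass R S S]

theorem Module.Basis.IsTwisted.piTensorProduct [Add G] {ι : Type*} [Fintype ι] {b : Basis G R S}
    {κ : G → G → R} (hb : b.IsTwisted κ) :
    (Basis.piTensorProduct fun _ : ι => b).IsTwisted fun u v => ∏ i, κ (u i) (v i) := by
  intro u v
  simp only [Basis.piTensorProduct_apply, tprod_mul_tprod]
  rw [← MultilinearMap.map_smul_univ]
  congr 1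
  funext i
  exact hb (u i) (v i)

variable [AddGroup G] [Fintype G] {b : Basis G R S} {κ : G → G → R}

theorem Module.Basis.IsTwisted.repr_mul (hb : b.IsTwisted κ) (x y : S) (m : G) :
    b.repr (x * y) m = ∑ u, κ u (-u + m) * b.repr x u * b.repr y (-u + m) := by
  classical
  conv_lhs => rw [← b.sum_repr x, ← b.sum_repr y]
  simp only [Finset.sum_mul, Finset.mul_sum, smul_mul_smul_comm, hb _ _, smul_smul, map_sum,
    map_smul, Basis.repr_self, Finsupp.coe_finsetSum, Finset.sum_apply, Finsupp.smul_apply,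
    Finsupp.single_apply, smul_eq_mul, mul_ite, mul_one, mul_zero]
  rw [Finset.sum_comm]
  refine Finset.sum_congr rfl fun u _ => ?_
  rw [Finset.sum_eq_single (-u + m)]
  · rw [if_pos (add_neg_cancel_left u m)]
    ring
  · intro v _ hv
    rw [if_neg]
    rintro rfl
    exact hv (neg_add_cancel_left u v).symm
  · simp

theorem Module.Basis.IsTwisted.repr_basis_mul (hb : b.IsTwisted κ) (v : G) (y : S) (m : G) :
    b.repr (b v * y) m = κ v (-v + m) * b.repr y (-v + m) := by
  classical
  rw [hb.repr_mul, Finset.sum_eq_single v]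
  · simp
  · intro u _ hu
    simp [Ne.symm hu]
  · simp

theorem Module.Basis.IsTwisted.repr_mul_basis (hb : b.IsTwisted κ) (x : S) (v m : G) :
    b.repr (x * b v) m = κ (m + -v) v * b.repr x (m + -v) := by
  classical
  rw [hb.repr_mul, Finset.sum_eq_single (m + -v)]
  · simp [neg_add_rev]
  · intro u _ hu
    rw [b.repr_self, Finsupp.single_apply, if_neg, mul_zero]
    rintro h
    exact hu (by rw [h, neg_add_rev, neg_neg, add_neg_cancel_left])
  · simp

end TwistedBasis

section SingleAlgHom

variable {R B ι : Type*} [CommRing R] [Ring B] [Algebra R B] [DecidableEq ι]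

local notation "single" => singleAlgHom (R := R) (A := fun _ : ι => B)

theorem singleAlgHom_mul_tprod_mul (d : ι) (a b : B) (z : ι → B) :
    single d a * tprod R z * single d b = tprod R (Function.update z d (a * z d * b)) := by
  simp only [singleAlgHom_apply, tprod_mul_tprod]
  congr 1
  funext i
  rcases eq_or_ne i d with rfl | hi <;> simp [*]

theorem singleAlgHom_mul_mul_add_eq_zero (d : ι) {a b a' b' : B}
    (h : ∀ y, a * y * b + a' * y * b' = 0) (z : ⨂[R] _ : ι, B) :
    single d a * z * single d b + single d a' * z * single d b' = 0 := by
  induction z using PiTensorProduct.induction_on with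
  | smul_tprod r z =>
    simp only [mul_smul_comm, smul_mul_assoc, singleAlgHom_mul_tprod_mul, ← smul_add,
      ← MultilinearMap.map_update_add, h, MultilinearMap.map_update_zero, smul_zero]
  | add z w hz hw =>
    rw [mul_add, add_mul, mul_add, add_mul, add_add_add_comm, hz, hw, add_zero]

end SingleAlgHom

theorem smul_add_mul_self {S : Type*} [Ring S] (s : ℤ) (t y : S) :
    (s • t + y) * (s • t + y) = (s * s) • (t * t) + (s • (t * y + y * t) + y * y) := by
  simp only [add_mul, mul_add, smul_mul_assoc, mul_smul_comm, smul_smul, smul_add]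
  abel

theorem two_le_of_not_isSquare {q : ℕ} (hq : ¬IsSquare q) : 2 ≤ q := by
  by_contra! h
  interval_cases q
  · exact hq ⟨0, rfl⟩
  · exact hq ⟨1, rfl⟩

theorem zmod_two_eq_zero_or_eq_one (a : ZMod 2) : a = 0 ∨ a = 1 := by
  decide +revert

theorem sum_zmod_two {M : Type*} [AddCommMonoid M] (f : ZMod 2 → M) : ∑ a, f a = f 0 + f 1 :=
  Fin.sum_univ_two f

section Twist

variable (q : ℕ)

def twist (e f : ZMod 2 × ZMod 2) : ℤ :=
  if e.2 = 1 ∧ f.2 = 1 then 0 else (-1) ^ (e.2.val * f.1.val) * q ^ (e.1.val * f.1.val)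

theorem twist_zero_left (e : ZMod 2 × ZMod 2) : twist q 0 e = 1 := by
  simp [twist]

theorem twist_zero_right (e : ZMod 2 × ZMod 2) : twist q e 0 = 1 := by
  simp [twist]

theorem twist_of_snd_eq_one {e f : ZMod 2 × ZMod 2} (he : e.2 = 1) (hf : f.2 = 1) :
    twist q e f = 0 :=
  if_pos ⟨he, hf⟩

theorem twist_self_of_snd_eq_zero {e : ZMod 2 × ZMod 2} (he : e.2 = 0) :
    twist q e e = if e.1 = 1 then (q : ℤ) else 1 := by
  rcases zmod_two_eq_zero_or_eq_one e.1 with h | h <;> simp [twist, he, h, ZMod.val_one]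

theorem twist_one_zero_left {e : ZMod 2 × ZMod 2} (he : e.2 = 0) :
    twist q (1, 0) e = q ^ e.1.val := by
  simp [twist, he, ZMod.val_one]

theorem twist_one_zero_right {e : ZMod 2 × ZMod 2} (he : e.2 = 0) :
    twist q e (1, 0) = q ^ e.1.val := by
  simp [twist, he, ZMod.val_one]

theorem prod_twist_single_left {ι : Type*} [Fintype ι] [DecidableEq ι] (d : ι)
    (e : ZMod 2 × ZMod 2) (u : ι → ZMod 2 × ZMod 2) :
    ∏ i, twist q ((Pi.single d e : ι → ZMod 2 × ZMod 2) i) (u i) = twist q e (u d) := by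
  rw [Finset.prod_eq_single d (fun i _ hi => by simp [hi, twist_zero_left]) (by simp)]
  simp

theorem prod_twist_single_right {ι : Type*} [Fintype ι] [DecidableEq ι] (d : ι)
    (e : ZMod 2 × ZMod 2) (u : ι → ZMod 2 × ZMod 2) :
    ∏ i, twist q (u i) ((Pi.single d e : ι → ZMod 2 × ZMod 2) i) = twist q (u d) e := by
  rw [Finset.prod_eq_single d (fun i _ hi => by simp [hi, twist_zero_right]) (by simp)]
  simp

end Twist

section Supports

variable {ι : Type*} [Fintype ι]

def xSupport (u : ι → ZMod 2 × ZMod 2) : Finset ι := {i | (u i).2 = 1}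

def tSupport (u : ι → ZMod 2 × ZMod 2) : Finset ι := {i | (u i).1 = 1}

theorem eq_zero_of_xSupport_tSupport_eq_empty {u : ι → ZMod 2 × ZMod 2}
    (hx : xSupport u = ∅) (ht : tSupport u = ∅) : u = 0 := by
  funext i
  have hx := Finset.filter_eq_empty_iff.mp hx (Finset.mem_univ i)
  have ht := Finset.filter_eq_empty_iff.mp ht (Finset.mem_univ i)
  ext
  · exact (zmod_two_eq_zero_or_eq_one _).resolve_right ht
  · exact (zmod_two_eq_zero_or_eq_one _).resolve_right hx

theorem eq_single_of_xSupport_eq_empty_of_tSupport_eq_singleton [DecidableEq ι]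
    {u : ι → ZMod 2 × ZMod 2} {d : ι} (hx : xSupport u = ∅) (ht : tSupport u = {d}) :
    u = Pi.single d (1, 0) := by
  funext i
  have hx := Finset.filter_eq_empty_iff.mp hx (Finset.mem_univ i)
  have ht := Finset.ext_iff.mp ht i
  simp only [tSupport, Finset.mem_filter, Finset.mem_univ, true_and, Finset.mem_singleton] at ht
  rcases eq_or_ne i d with rfl | hi
  · ext
    · simpa using ht
    · simpa using (zmod_two_eq_zero_or_eq_one _).resolve_right hx
  · ext
    · simpa [hi] using (zmod_two_eq_zero_or_eq_one _).resolve_right (mt ht.mp hi)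
    · simpa [hi] using (zmod_two_eq_zero_or_eq_one _).resolve_right hx

theorem card_xSupport_add {q : ℕ} {u v : ι → ZMod 2 × ZMod 2}
    (h : ∏ i, twist q (u i) (v i) ≠ 0) :
    (xSupport (u + v)).card = (xSupport u).card + (xSupport v).card := by
  classical
  have hdisj (i : ι) : ¬((u i).2 = 1 ∧ (v i).2 = 1) := fun hi =>
    Finset.prod_ne_zero_iff.mp h i (Finset.mem_univ i) (twist_of_snd_eq_one q hi.1 hi.2)
  have key : ∀ a b : ZMod 2, ¬(a = 1 ∧ b = 1) → (a + b = 1 ↔ a = 1 ∨ b = 1) := by decide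
  rw [← Finset.card_union_of_disjoint]
  · congr 1
    ext i
    simp [xSupport, key _ _ (hdisj i)]
  · rw [Finset.disjoint_left]
    intro i hu hv
    exact hdisj i ⟨(Finset.mem_filter.mp hu).2, (Finset.mem_filter.mp hv).2⟩

theorem xSupport_single_add [DecidableEq ι] (d : ι) (m : ι → ZMod 2 × ZMod 2) :
    xSupport (Pi.single d (1, 0) + m) = xSupport m := by
  ext i
  rcases eq_or_ne i d with rfl | hi <;> simp [xSupport, *]

variable (q : ℕ)

def diagTwist (u : ι → ZMod 2 × ZMod 2) : ℤ := ∏ i, twist q (u i) (u i)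

theorem diagTwist_of_xSupport_eq_empty {u : ι → ZMod 2 × ZMod 2} (hx : xSupport u = ∅) :
    diagTwist q u = (q : ℤ) ^ (tSupport u).card := by
  have h0 (i : ι) : (u i).2 = 0 := (zmod_two_eq_zero_or_eq_one _).resolve_right
    (Finset.filter_eq_empty_iff.mp hx (Finset.mem_univ i))
  simp only [diagTwist, twist_self_of_snd_eq_zero q (h0 _), Finset.prod_ite, Finset.prod_const,
    one_pow, mul_one, tSupport]

theorem diagTwist_of_xSupport_ne_empty {u : ι → ZMod 2 × ZMod 2} (hx : xSupport u ≠ ∅) :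
    diagTwist q u = 0 := by
  obtain ⟨i, hi⟩ := Finset.nonempty_iff_ne_empty.mpr hx
  have hi : (u i).2 = 1 := (Finset.mem_filter.mp hi).2
  exact Finset.prod_eq_zero (Finset.mem_univ i) (twist_of_snd_eq_one q hi hi)

theorem diagTwist_nonneg (u : ι → ZMod 2 × ZMod 2) : 0 ≤ diagTwist q u := by
  by_cases hx : xSupport u = ∅
  · rw [diagTwist_of_xSupport_eq_empty q hx]
    positivity
  · rw [diagTwist_of_xSupport_ne_empty q hx]

theorem diagTwist_zero : diagTwist q (0 : ι → ZMod 2 × ZMod 2) = 1 := by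
  simp [diagTwist, twist_zero_left]

theorem diagTwist_single [DecidableEq ι] (d : ι) :
    diagTwist q (Pi.single d (1, 0) : ι → ZMod 2 × ZMod 2) = q := by
  rw [diagTwist, prod_twist_single_left, Pi.single_eq_same, twist_self_of_snd_eq_zero q rfl,
    if_pos rfl]

end Supports

section SumOfSquares

variable {q : ℕ} {ι : Type*} [Fintype ι] [DecidableEq ι]
  {c : (ι → ZMod 2 × ZMod 2) → ℤ}

theorem exists_coeff_single_ne_zero (hq : ¬IsSquare q) (hc : ∑ u, diagTwist q u * c u ^ 2 = q) :
    ∃ d : ι, c (Pi.single d (1, 0)) ≠ 0 := by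
  by_contra! hsingle
  have hterm : ∀ u ≠ 0, diagTwist q u * c u ^ 2 = 0 := by
    intro u hu0
    by_contra hne
    have hx : xSupport u = ∅ := by
      by_contra hx
      exact hne (by rw [diagTwist_of_xSupport_ne_empty q hx, zero_mul])
    have ht : 2 ≤ (tSupport u).card := by
      by_contra! ht
      obtain h0 | h1 : (tSupport u).card = 0 ∨ (tSupport u).card = 1 := by omega
      · exact hu0 (eq_zero_of_xSupport_tSupport_eq_empty hx (Finset.card_eq_zero.mp h0))
      · obtain ⟨d, hd⟩ := Finset.card_eq_one.mp h1
        rw [eq_single_of_xSupport_eq_empty_of_tSupport_eq_singleton hx hd, hsingle d] at hne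
        simp at hne
    have hle : diagTwist q u * c u ^ 2 ≤ q :=
      hc ▸ Finset.single_le_sum (f := fun v => diagTwist q v * c v ^ 2)
        (fun v _ => by have := diagTwist_nonneg q v; positivity) (Finset.mem_univ u)
    have hcu : 1 ≤ c u ^ 2 := by
      have hcu0 : c u ≠ 0 := fun h => hne (by simp [h])
      have := sq_pos_of_ne_zero hcu0
      omega
    have hq2 : (2 : ℤ) ≤ q := by exact_mod_cast two_le_of_not_isSquare hq
    rw [diagTwist_of_xSupport_eq_empty q hx] at hle
    nlinarith [pow_le_pow_right₀ (by omega : (1 : ℤ) ≤ q) ht]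
  rw [Finset.sum_eq_single 0 (fun u _ hu => hterm u hu) (by simp), diagTwist_zero, one_mul] at hc
  exact hq ⟨(c 0).natAbs, by zify; rw [← hc, abs_mul_abs_self, sq]⟩

theorem exists_coeff_eq_single (hq : ¬IsSquare q) (hc : ∑ u, diagTwist q u * c u ^ 2 = q) :
    ∃ (d : ι) (s : ℤ), (s = 1 ∨ s = -1) ∧
      ∀ u, xSupport u = ∅ → c u = if u = Pi.single d (1, 0) then s else 0 := by
  obtain ⟨d, hd⟩ := exists_coeff_single_ne_zero hq hc
  set v : ι → ZMod 2 × ZMod 2 := Pi.single d (1, 0)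
  have hnonneg : ∀ u ∈ Finset.univ.erase v, 0 ≤ diagTwist q u * c u ^ 2 :=
    fun u _ => by have := diagTwist_nonneg q u; positivity
  have hsplit := Finset.add_sum_erase Finset.univ (fun u => diagTwist q u * c u ^ 2)
    (Finset.mem_univ v)
  rw [hc, diagTwist_single] at hsplit
  have hq0 : (0 : ℤ) < q := by have := two_le_of_not_isSquare hq; omega
  have hrest := Finset.sum_nonneg hnonneg
  have hsq : c v ^ 2 = 1 := by
    have := sq_pos_of_ne_zero hd
    nlinarith
  refine ⟨d, c v, Int.eq_one_or_neg_one_of_mul_eq_one (by rw [← sq, hsq]), fun u hu => ?_⟩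
  split_ifs with huv
  · rw [huv]
  · have hzero := (Finset.sum_eq_zero_iff_of_nonneg hnonneg).mp (by nlinarith) u
      (Finset.mem_erase.mpr ⟨huv, Finset.mem_univ u⟩)
    rw [diagTwist_of_xSupport_eq_empty q hu] at hzero
    exact pow_eq_zero_iff two_ne_zero |>.mp
      ((mul_eq_zero.mp hzero).resolve_left (pow_ne_zero _ hq0.ne'))

end SumOfSquares

/-- The ring structure on `⨂[ℤ] _, A q` needs a `ℤ`-algebra structure on `A q` whose module
structure is the canonical `ℤ`-module `AddCommGroup.toIntModule`; the default one, inherited from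
`RingQuot`, is not reducibly equal to it. -/
abbrev A.intAlgebra (q : ℕ) : Algebra ℤ (A q) := Ring.toIntAlgebra _

section TensorPower

attribute [local instance] A.intAlgebra

section Generators

variable (q : ℕ)

theorem tA_mul_tA : tA q * tA q = q := by
  simpa [tA] using RingQuot.mkRingHom_rel (ARel.t_sq (q := q))

theorem tA_mul_xA : tA q * xA q = -(xA q * tA q) := by
  simpa [tA, xA] using RingQuot.mkRingHom_rel (ARel.t_x (q := q))

theorem xA_mul_xA : xA q * xA q = 0 := by
  simpa [xA] using RingQuot.mkRingHom_rel (ARel.x_sq (q := q))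

theorem xA_mul_tA : xA q * tA q = -(tA q * xA q) := by
  rw [tA_mul_xA, neg_neg]

def monA (e : ZMod 2 × ZMod 2) : A q := tA q ^ e.1.val * xA q ^ e.2.val

theorem monA_zero : monA q 0 = 1 := by
  simp [monA]

theorem monA_one_zero : monA q (1, 0) = tA q := by
  simp [monA, ZMod.val_one]

theorem monA_zero_one : monA q (0, 1) = xA q := by
  simp [monA, ZMod.val_one]

theorem monA_mul_monA (e f : ZMod 2 × ZMod 2) :
    monA q e * monA q f = twist q e f • monA q (e + f) := by
  -- The negation of `A q` comes from `RingQuot`, and only unifies with the ring negation in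
  -- `neg_mul` and `mul_neg` once the type `A q` is given explicitly.
  have hneg (y z : A q) : y * -z = -(y * z) := mul_neg (α := A q) y z
  have htt (y : A q) : tA q * (tA q * y) = q * y := by rw [← mul_assoc, tA_mul_tA]
  have hxt (y : A q) : xA q * (tA q * y) = -(tA q * (xA q * y)) := by
    rw [← mul_assoc, xA_mul_tA, ← mul_assoc]
    exact neg_mul (α := A q) _ _
  obtain ⟨e₁, e₂⟩ := e
  obtain ⟨f₁, f₂⟩ := f
  rcases zmod_two_eq_zero_or_eq_one e₁ with rfl | rfl <;>
    rcases zmod_two_eq_zero_or_eq_one e₂ with rfl | rfl <;>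
    rcases zmod_two_eq_zero_or_eq_one f₁ with rfl | rfl <;>
    rcases zmod_two_eq_zero_or_eq_one f₂ with rfl | rfl <;>
    simp [monA, twist, ZMod.val_one, show (1 + 1 : ZMod 2) = 0 from rfl] <;>
    simp [mul_assoc, tA_mul_tA, xA_mul_tA, xA_mul_xA, htt, hxt, hneg]

def repA : A q →+* Matrix (Fin 2) (Fin 2) (ℤ√(q : ℤ)) :=
  RingQuot.lift ⟨(FreeAlgebra.lift ℤ
    ![!![Zsqrtd.sqrtd, 0; 0, -Zsqrtd.sqrtd], !![0, 1; 0, 0]]).toRingHom, by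
    rintro _ _ ⟨⟩ <;>
      simp [Matrix.natCast_fin_two, Zsqrtd.dmuld, ← Matrix.ext_iff, Fin.forall_fin_two]⟩

theorem repA_monA (e : ZMod 2 × ZMod 2) :
    repA q (monA q e) =
      !![Zsqrtd.sqrtd, 0; 0, -Zsqrtd.sqrtd] ^ e.1.val * !![0, 1; 0, 0] ^ e.2.val := by
  simp only [monA, map_mul, map_pow]
  simp [repA, tA, xA]

theorem linearIndependent_monA : LinearIndependent ℤ (monA q) := by
  refine LinearIndependent.of_comp (repA q).toAddMonoidHom.toIntLinearMap ?_
  rw [Fintype.linearIndependent_iff]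
  intro g hg
  simp [Fintype.sum_prod_type, sum_zmod_two, repA_monA, ZMod.val_one, Matrix.one_fin_two,
    ← Matrix.ext_iff, Fin.forall_fin_two, Zsqrtd.ext_iff, -zsmul_eq_mul] at hg
  simp only [zsmul_eq_mul, Zsqrtd.re_mul, Zsqrtd.im_mul, Zsqrtd.re_intCast, Zsqrtd.im_intCast,
    Zsqrtd.re_sqrtd, Zsqrtd.im_sqrtd] at hg
  rintro ⟨a, b⟩
  rcases zmod_two_eq_zero_or_eq_one a with rfl | rfl <;>
    rcases zmod_two_eq_zero_or_eq_one b with rfl | rfl <;> linarith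

theorem span_monA : ⊤ ≤ Submodule.span ℤ (Set.range (monA q)) := by
  rintro a -
  obtain ⟨z, rfl⟩ := RingQuot.mkRingHom_surjective (ARel q) a
  induction z using FreeAlgebra.induction with
  | grade0 r =>
    convert Submodule.smul_mem _ r (Submodule.subset_span (Set.mem_range_self (f := monA q) 0))
      using 1
    simp [monA_zero]
  | grade1 i =>
    fin_cases i
    · exact Submodule.subset_span ⟨(1, 0), monA_one_zero q⟩
    · exact Submodule.subset_span ⟨(0, 1), monA_zero_one q⟩
  | mul a b ha hb =>
    rw [map_mul]
    have := Submodule.mul_mem_mul ha hb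
    rw [Submodule.span_mul_span] at this
    refine Submodule.span_le.mpr ?_ this
    rintro _ ⟨_, ⟨e, rfl⟩, _, ⟨f, rfl⟩, rfl⟩
    change monA q e * monA q f ∈ _
    rw [monA_mul_monA]
    exact Submodule.smul_mem _ _ (Submodule.subset_span ⟨_, rfl⟩)
  | add a b ha hb =>
    rw [map_add]
    exact add_mem ha hb

def basisA : Basis (ZMod 2 × ZMod 2) ℤ (A q) := Basis.mk (linearIndependent_monA q) (span_monA q)

theorem basisA_isTwisted : (basisA q).IsTwisted (twist q) := by
  intro e f
  simp only [basisA, Basis.mk_apply]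
  exact monA_mul_monA q e f

theorem tA_mul_mul_xA_add_mul_xA_mul_tA (y : A q) : tA q * y * xA q + y * xA q * tA q = 0 := by
  let L : A q →ₗ[ℤ] A q := LinearMap.mulLeft ℤ (tA q) ∘ₗ LinearMap.mulRight ℤ (xA q) +
    LinearMap.mulRight ℤ (xA q * tA q)
  have hL : L = 0 := (basisA q).ext fun e => by
    simp only [L, basisA, Basis.mk_apply, ← monA_one_zero, ← monA_zero_one, LinearMap.add_apply,
      LinearMap.comp_apply, LinearMap.mulLeft_apply, LinearMap.mulRight_apply,
      LinearMap.zero_apply, monA_mul_monA, mul_smul_comm, smul_smul]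
    rw [show ((1, 0) + (e + (0, 1)) : ZMod 2 × ZMod 2) = e + ((0, 1) + (1, 0)) by abel,
      ← add_smul]
    convert zero_smul ℤ _
    obtain ⟨e₁, e₂⟩ := e
    rcases zmod_two_eq_zero_or_eq_one e₁ with rfl | rfl <;>
      rcases zmod_two_eq_zero_or_eq_one e₂ with rfl | rfl <;> simp [twist, ZMod.val_one]
  simpa [L, mul_assoc] using LinearMap.congr_fun hL y

theorem xA_mul_mul_xA (y : A q) : xA q * y * xA q = 0 := by
  let L : A q →ₗ[ℤ] A q := LinearMap.mulLeft ℤ (xA q) ∘ₗ LinearMap.mulRight ℤ (xA q)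
  have hL : L = 0 := (basisA q).ext fun e => by
    simp only [L, basisA, Basis.mk_apply, ← monA_zero_one, LinearMap.comp_apply,
      LinearMap.mulLeft_apply, LinearMap.mulRight_apply, LinearMap.zero_apply, monA_mul_monA,
      mul_smul_comm, smul_smul]
    convert zero_smul ℤ _
    obtain ⟨e₁, e₂⟩ := e
    rcases zmod_two_eq_zero_or_eq_one e₁ with rfl | rfl <;>
      rcases zmod_two_eq_zero_or_eq_one e₂ with rfl | rfl <;> simp [twist, ZMod.val_one]
  simpa [L, mul_assoc] using LinearMap.congr_fun hL y

end Generators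

variable {q : ℕ} {ι : Type*}

local notation "single" => singleAlgHom (R := ℤ) (A := fun _ : ι => A q)

section Basis

variable (q) in
def basisT [Finite ι] : Basis (ι → ZMod 2 × ZMod 2) ℤ (⨂[ℤ] _ : ι, A q) :=
  Basis.piTensorProduct fun _ => basisA q

variable [Fintype ι]

variable (q) in
theorem basisT_isTwisted :
    (basisT q (ι := ι)).IsTwisted fun u v => ∏ i, twist q (u i) (v i) :=
  (basisA_isTwisted q).piTensorProduct

variable (q) in
theorem basisT_zero : basisT q (0 : ι → ZMod 2 × ZMod 2) = 1 := by
  simp only [basisT, Basis.piTensorProduct_apply, basisA, Basis.mk_apply, Pi.zero_apply, monA_zero]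
  rfl

theorem singleAlgHom_monA [DecidableEq ι] (d : ι) (e : ZMod 2 × ZMod 2) :
    single d (monA q e) = basisT q (Pi.single d e) := by
  simp only [basisT, Basis.piTensorProduct_apply, basisA, Basis.mk_apply, singleAlgHom_apply]
  congr 1
  funext i
  rcases eq_or_ne i d with rfl | hi <;> simp [*, monA_zero]

end Basis

theorem single_tA_mul_self [DecidableEq ι] (d : ι) : single d (tA q) * single d (tA q) = q := by
  rw [← map_mul, tA_mul_tA, map_natCast]

section Forward

variable [Fintype ι] [DecidableEq ι]

theorem sum_diagTwist_mul_sq_repr_of_mul_self_eq {a : ⨂[ℤ] _ : ι, A q} (ha : a * a = q) :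
    ∑ u, diagTwist q u * (basisT q).repr a u ^ 2 = q := by
  have hq : (basisT q).repr (q : ⨂[ℤ] _ : ι, A q) 0 = q := by
    rw [← Int.cast_natCast, ← zsmul_one, ← basisT_zero q, map_zsmul, Basis.repr_self]
    simp
  rw [← hq, ← ha, (basisT_isTwisted q).repr_mul]
  refine Finset.sum_congr rfl fun u _ => ?_
  rw [add_zero, ZModModule.neg_eq_self, diagTwist, sq, mul_assoc]

theorem twist_mul_repr_mul_repr_eq_zero {e : ⨂[ℤ] _ : ι, A q} {m : ι → ZMod 2 × ZMod 2}
    {d : ι}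
    (hmd : (m d).2 = 0) (hfree : ∀ u, xSupport u = ∅ → (basisT q).repr e u = 0)
    (hlow : ∀ u, (u d).2 = 0 → (xSupport u).card < (xSupport m).card →
      (basisT q).repr e u = 0)
    (u : ι → ZMod 2 × ZMod 2) :
    (∏ i, twist q (u i) ((-u + m) i)) * (basisT q).repr e u * (basisT q).repr e (-u + m) = 0 := by
  set v := -u + m
  by_cases htw : ∏ i, twist q (u i) (v i) = 0
  · rw [htw, zero_mul, zero_mul]
  have hcard := card_xSupport_add htw
  rw [add_neg_cancel_left] at hcard
  have hd : (u d).2 = 0 ∧ (v d).2 = 0 := by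
    have hdisj : ¬((u d).2 = 1 ∧ (v d).2 = 1) := fun h =>
      Finset.prod_ne_zero_iff.mp htw d (Finset.mem_univ d) (twist_of_snd_eq_one q h.1 h.2)
    have key : ∀ a b : ZMod 2, ¬(a = 1 ∧ b = 1) → a + b = 0 → a = 0 ∧ b = 0 := by decide
    refine key _ _ hdisj ?_
    rw [← hmd, ← add_neg_cancel_left u m]
    rfl
  by_cases hu : xSupport u = ∅
  · rw [hfree u hu, mul_zero, zero_mul]
  by_cases hv : xSupport v = ∅
  · rw [hfree v hv, mul_zero]
  have hu' := Finset.card_pos.mpr (Finset.nonempty_iff_ne_empty.mpr hu)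
  have hv' := Finset.card_pos.mpr (Finset.nonempty_iff_ne_empty.mpr hv)
  rw [hlow u hd.1 (by omega), mul_zero, zero_mul]

theorem repr_eq_zero_of_snd_eq_zero (hq : q ≠ 0) {s : ℤ} (hs : s ≠ 0) (d : ι)
    {e : ⨂[ℤ] _ : ι, A q} (hfree : ∀ u, xSupport u = ∅ → (basisT q).repr e u = 0)
    (hrel : s • (basisT q (Pi.single d (1, 0)) * e + e * basisT q (Pi.single d (1, 0))) + e * e =
      0)
    (m : ι → ZMod 2 × ZMod 2) (hmd : (m d).2 = 0) : (basisT q).repr e m = 0 := by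
  induction hk : (xSupport m).card using Nat.strong_induction_on generalizing m with
  | _ k ih =>
  have hT := basisT_isTwisted q (ι := ι)
  have hsq : (basisT q).repr (e * e) (Pi.single d (1, 0) + m) = 0 := by
    rw [hT.repr_mul]
    refine Finset.sum_eq_zero fun u _ => twist_mul_repr_mul_repr_eq_zero (by simpa using hmd) hfree
      (fun u hud hu => ih _ (by rwa [xSupport_single_add, hk] at hu) u hud rfl) u
  have hcoeff := congrArg (fun z => (basisT q).repr z (Pi.single d (1, 0) + m)) hrel
  simp only [map_add, map_smul, map_zero, Finsupp.add_apply, Finsupp.smul_apply, Finsupp.coe_zero,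
    Pi.zero_apply, hsq, add_zero, hT.repr_basis_mul, hT.repr_mul_basis, prod_twist_single_left,
    prod_twist_single_right, neg_add_cancel_left, add_neg_cancel_comm, twist_one_zero_left q hmd,
    twist_one_zero_right q hmd, smul_eq_mul] at hcoeff
  have hpow : (q : ℤ) ^ (m d).1.val ≠ 0 := pow_ne_zero _ (by exact_mod_cast hq)
  have : s * (2 * (q : ℤ) ^ (m d).1.val) * (basisT q).repr e m = 0 := by
    linear_combination hcoeff
  simpa [hs, hpow] using this

theorem exists_eq_mul_of_repr_eq_zero (d : ι) {e : ⨂[ℤ] _ : ι, A q}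
    (he : ∀ m, (m d).2 = 0 → (basisT q).repr e m = 0) :
    ∃ f, e = f * basisT q (Pi.single d (0, 1)) := by
  have hT := basisT_isTwisted q (ι := ι)
  set x : ι → ZMod 2 × ZMod 2 := Pi.single d (0, 1)
  have hrepr (g : (ι → ZMod 2 × ZMod 2) → ℤ) (m) :
      (basisT q).repr ((basisT q).equivFun.symm g) m = g m :=
    congrFun ((basisT q).equivFun.apply_symm_apply g) m
  refine ⟨(basisT q).equivFun.symm fun m => (basisT q).repr e (m + x),
    (basisT q).ext_elem fun m => ?_⟩
  rw [hT.repr_mul_basis, prod_twist_single_right, hrepr, neg_add_cancel_right]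
  rcases zmod_two_eq_zero_or_eq_one (m d).2 with h | h
  · rw [he m h, twist_of_snd_eq_one q (by simp [x, h]) rfl, zero_mul]
  · rw [show twist q ((m + -x) d) (0, 1) = 1 by simp [twist, x, h], one_mul]

theorem exists_eq_smul_single_add_mul_single (hq : ¬IsSquare q) {a : ⨂[ℤ] _ : ι, A q}
    (ha : a * a = q) :
    ∃ (d : ι) (s : ℤ), (s = 1 ∨ s = -1) ∧
      ∃ f, a = s • single d (tA q) + f * single d (xA q) := by
  obtain ⟨d, s, hs, hcoeff⟩ :=
    exists_coeff_eq_single hq (sum_diagTwist_mul_sq_repr_of_mul_self_eq ha)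
  have ht : single d (tA q) = basisT q (Pi.single d (1, 0)) := by
    rw [← monA_one_zero, singleAlgHom_monA]
  have hx : single d (xA q) = basisT q (Pi.single d (0, 1)) := by
    rw [← monA_zero_one, singleAlgHom_monA]
  set e := a - s • single d (tA q)
  have hae : a = s • single d (tA q) + e := (add_sub_cancel _ _).symm
  have hfree : ∀ u, xSupport u = ∅ → (basisT q).repr e u = 0 := by
    intro u hu
    rw [map_sub, map_smul, ht, Basis.repr_self, Finsupp.sub_apply, Finsupp.smul_apply,
      hcoeff u hu, Finsupp.single_apply]
    by_cases h : u = Pi.single d (1, 0)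
    · simp [h]
    · simp [h, Ne.symm h]
  have hss : s * s = 1 := by rcases hs with rfl | rfl <;> norm_num
  have hrel : s • (single d (tA q) * e + e * single d (tA q)) + e * e = 0 := by
    have h := smul_add_mul_self s (single d (tA q)) e
    rw [← hae, ha, hss, one_smul, single_tA_mul_self] at h
    rw [← neg_add_cancel_left (q : ⨂[ℤ] _ : ι, A q) (_ + _), ← h, neg_add_cancel]
  have hs0 : s ≠ 0 := by rcases hs with rfl | rfl <;> norm_num
  have hq0 : q ≠ 0 := by have := two_le_of_not_isSquare hq; omega
  obtain ⟨f, hf⟩ := exists_eq_mul_of_repr_eq_zero d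
    (repr_eq_zero_of_snd_eq_zero hq0 hs0 d hfree (by rwa [← ht]))
  exact ⟨d, s, hs, f, by rw [hae, hf, hx]⟩

end Forward

theorem mul_self_smul_single_add_mul_single [DecidableEq ι] (d : ι) {s : ℤ}
    (hs : s = 1 ∨ s = -1) (f : ⨂[ℤ] _ : ι, A q) :
    (s • single d (tA q) + f * single d (xA q)) * (s • single d (tA q) + f * single d (xA q)) =
      q := by
  have hss : s * s = 1 := by rcases hs with rfl | rfl <;> norm_num
  have hanti :
      single d (tA q) * (f * single d (xA q)) + f * single d (xA q) * single d (tA q) = 0 := by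
    have h (y : A q) : tA q * y * xA q + 1 * y * (xA q * tA q) = 0 := by
      rw [one_mul, ← mul_assoc]
      exact tA_mul_mul_xA_add_mul_xA_mul_tA q y
    have := singleAlgHom_mul_mul_add_eq_zero d h f
    rwa [map_one, one_mul, map_mul, ← mul_assoc f, mul_assoc (single d (tA q))] at this
  have hnil : f * single d (xA q) * (f * single d (xA q)) = 0 := by
    have := singleAlgHom_mul_mul_add_eq_zero (R := ℤ) d (a' := 0) (b' := 0)
      (fun y => by rw [xA_mul_mul_xA, mul_zero, add_zero]) f
    rw [map_zero, mul_zero, add_zero] at this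
    rw [mul_assoc, ← mul_assoc (single d (xA q)), this, mul_zero]
  rw [smul_add_mul_self, hss, one_smul, single_tA_mul_self, hanti, smul_zero, hnil, add_zero,
    add_zero]

theorem tI_eq_singleAlgHom (n : ℕ) (d : Fin n) :
    tI q n d = singleAlgHom (R := ℤ) (A := fun _ : Fin n => A q) d (tA q) := by
  rw [tI, singleAlgHom_apply, MonoidHom.mulSingle_apply]
  congr 1
  funext j
  rw [Pi.mulSingle_apply]

theorem xI_eq_singleAlgHom (n : ℕ) (d : Fin n) :
    xI q n d = singleAlgHom (R := ℤ) (A := fun _ : Fin n => A q) d (xA q) := by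
  rw [xI, singleAlgHom_apply, MonoidHom.mulSingle_apply]
  congr 1
  funext j
  rw [Pi.mulSingle_apply]

end TensorPower

theorem stmt16_general (q : ℕ) (hq : ¬ IsSquare q) (n : ℕ) (a : Tpow q n) :
    a * a = (q : Tpow q n) ↔
    ∃ (d : Fin n) (s : ℤ), (s = 1 ∨ s = -1) ∧
      ∃ f : Tpow q n, a = s • tI q n d + f * xI q n d := by
  simp only [tI_eq_singleAlgHom, xI_eq_singleAlgHom]
  constructor
  · exact exists_eq_smul_single_add_mul_single hq
  · rintro ⟨d, s, hs, f, rfl⟩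
    exact mul_self_smul_single_add_mul_single d hs f

/-- An element `a ∈ A^{⊗ n}` satisfies `a² = q·1` if and only if
`a = ±t_d + f·x_d` for some `d ∈ {1, …, n}` and `f ∈ A^{⊗ n}`. -/
theorem stmt16 (q : ℕ) (hq : ¬ IsSquare q) (n : ℕ) (hn : 1 ≤ n) (a : Tpow q n) :
    a * a = (q : Tpow q n) ↔
    ∃ (d : Fin n) (s : ℤ), (s = 1 ∨ s = -1) ∧
      ∃ f : Tpow q n, a = s • tI q n d + f * xI q n d :=
  stmt16_general q hq n a
end
end
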